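/- arXiv:1903.12475 — 11 statements merged into one kernel-verified Lean document; each statement's English description precedes it below -/
import Mathlib

section
/- For a proper subdomain G of R^n, a parameter p ≥ 1, and points z1, z2 in G, the Barrlund distance satisfies s_G(z1,z2) ≤ b_{G,p}(z1,z2) ≤ 2^{1-1/p} · s_G(z1,z2), where s_G is the triangular ratio metric. -/
open Set

/-- Barrlund distance with parameter `p` in a domain `G`. -/
noncomputable def barrlund {n : ℕ} (G : Set (EuclideanSpace ℝ (Fin n))) (p : ℝ)
    (x y : EuclideanSpace ℝ (Fin n)) : ℝ :=
  sSup ((fun z => dist x y / (dist x z ^ p + dist z y ^ p) ^ (1 / p)) '' frontier G)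

/-- Triangular ratio metric in a domain `G`. -/
noncomputable def triRatio {n : ℕ} (G : Set (EuclideanSpace ℝ (Fin n)))
    (x y : EuclideanSpace ℝ (Fin n)) : ℝ :=
  sSup ((fun z => dist x y / (dist x z + dist z y)) '' frontier G)

/-!
Both bounds hold pointwise, for each boundary point `z`, between the two quotients whose
suprema define `s_G` and `b_{G,p}`: with `a = |z₁ - z|` and `b = |z - z₂|`, the power mean
inequality gives `(a ^ p + b ^ p) ^ (1 / p) ≤ a + b ≤ 2 ^ (1 - 1 / p) * (a ^ p + b ^ p) ^ (1 / p)`.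
Passing to suprema only needs the triangle inequality, which bounds the quotients of `s_G` by `1`.
-/

section PowerMean

variable {a b d p : ℝ}

theorem add_le_two_rpow_mul_rpow_add_rpow (ha : 0 ≤ a) (hb : 0 ≤ b) (hp : 1 ≤ p) :
    a + b ≤ 2 ^ (1 - 1 / p) * (a ^ p + b ^ p) ^ (1 / p) := by
  have hp0 : 0 < p := zero_lt_one.trans_le hp
  lift a to NNReal using ha
  lift b to NNReal using hb
  have h : ((a + b) ^ p) ^ (1 / p) ≤ ((2 : NNReal) ^ (p - 1) * (a ^ p + b ^ p)) ^ (1 / p) :=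
    NNReal.rpow_le_rpow (NNReal.rpow_add_le_mul_rpow_add_rpow a b hp) (by positivity)
  rw [← NNReal.rpow_mul, mul_one_div_cancel hp0.ne', NNReal.rpow_one, NNReal.mul_rpow,
    ← NNReal.rpow_mul, sub_mul, one_mul, mul_one_div_cancel hp0.ne'] at h
  exact_mod_cast h

theorem div_add_le_div_rpow_add_rpow (hd : 0 ≤ d) (ha : 0 ≤ a) (hb : 0 ≤ b) (hp : 1 ≤ p) :
    d / (a + b) ≤ d / (a ^ p + b ^ p) ^ (1 / p) := by
  rcases (add_nonneg ha hb).eq_or_lt with hab | hab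
  · rw [← hab, div_zero]
    positivity
  have hM : 0 < (a ^ p + b ^ p) ^ (1 / p) :=
    pos_of_mul_pos_right (hab.trans_le (add_le_two_rpow_mul_rpow_add_rpow ha hb hp))
      (by positivity)
  exact div_le_div_of_nonneg_left hd hM (Real.rpow_add_rpow_le_add ha hb hp)

theorem div_rpow_add_rpow_le (hd : 0 ≤ d) (ha : 0 ≤ a) (hb : 0 ≤ b) (hp : 1 ≤ p) :
    d / (a ^ p + b ^ p) ^ (1 / p) ≤ 2 ^ (1 - 1 / p) * (d / (a + b)) := by
  have hp0 : 0 < p := zero_lt_one.trans_le hp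
  rcases (add_nonneg ha hb).eq_or_lt with hab | hab
  · obtain ⟨rfl, rfl⟩ := (add_eq_zero_iff_of_nonneg ha hb).1 hab.symm
    rw [Real.zero_rpow hp0.ne', add_zero, Real.zero_rpow (one_div_pos.2 hp0).ne', div_zero]
    positivity
  calc d / (a ^ p + b ^ p) ^ (1 / p)
      = 2 ^ (1 - 1 / p) * (d / (2 ^ (1 - 1 / p) * (a ^ p + b ^ p) ^ (1 / p))) := by
        field_simp
    _ ≤ 2 ^ (1 - 1 / p) * (d / (a + b)) := by
        gcongr
        exact add_le_two_rpow_mul_rpow_add_rpow ha hb hp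

end PowerMean

theorem Real.sSup_image_le_mul_sSup_image {α : Type*} {s : Set α} {f g : α → ℝ} {c : ℝ}
    (hc : 0 ≤ c) (hf : BddAbove (f '' s)) (hgf : ∀ x ∈ s, g x ≤ c * f x) :
    sSup (g '' s) ≤ c * sSup (f '' s) := by
  rcases s.eq_empty_or_nonempty with rfl | hs
  · simp
  refine csSup_le (hs.image g) ?_
  rintro _ ⟨x, hx, rfl⟩
  exact (hgf x hx).trans (mul_le_mul_of_nonneg_left (le_csSup hf (mem_image_of_mem f hx)) hc)

theorem stmt0_general {n : ℕ} (G : Set (EuclideanSpace ℝ (Fin n)))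
    (p : ℝ) (hp : 1 ≤ p) (z1 z2 : EuclideanSpace ℝ (Fin n)) :
    triRatio G z1 z2 ≤ barrlund G p z1 z2 ∧
      barrlund G p z1 z2 ≤ 2 ^ (1 - 1 / p) * triRatio G z1 z2 := by
  set f := fun z : EuclideanSpace ℝ (Fin n) => dist z1 z2 / (dist z1 z + dist z z2)
  set g := fun z : EuclideanSpace ℝ (Fin n) =>
    dist z1 z2 / (dist z1 z ^ p + dist z z2 ^ p) ^ (1 / p)
  have hc : (0 : ℝ) ≤ 2 ^ (1 - 1 / p) := by positivity
  have hf₁ : ∀ z, f z ≤ 1 := fun z => div_le_one_of_le₀ (dist_triangle z1 z z2) (by positivity)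
  have hfg : ∀ z, f z ≤ g z := fun z =>
    div_add_le_div_rpow_add_rpow dist_nonneg dist_nonneg dist_nonneg hp
  have hgf : ∀ z, g z ≤ 2 ^ (1 - 1 / p) * f z := fun z =>
    div_rpow_add_rpow_le dist_nonneg dist_nonneg dist_nonneg hp
  have hf_bdd : BddAbove (f '' frontier G) := ⟨1, by rintro _ ⟨z, -, rfl⟩; exact hf₁ z⟩
  have hg_bdd : BddAbove (g '' frontier G) := ⟨2 ^ (1 - 1 / p) * 1, by
    rintro _ ⟨z, -, rfl⟩; exact (hgf z).trans (mul_le_mul_of_nonneg_left (hf₁ z) hc)⟩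
  refine ⟨?_, Real.sSup_image_le_mul_sSup_image hc hf_bdd fun z _ => hgf z⟩
  have h := Real.sSup_image_le_mul_sSup_image zero_le_one hg_bdd
    fun z _ => (hfg z).trans_eq (one_mul _).symm
  rw [one_mul] at h
  exact h

theorem stmt0 {n : ℕ} (G : Set (EuclideanSpace ℝ (Fin n)))
    (hG : IsOpen G) (hGc : IsConnected G) (hGne : G ≠ univ)
    (p : ℝ) (hp : 1 ≤ p) (z1 z2 : EuclideanSpace ℝ (Fin n))
    (hz1 : z1 ∈ G) (hz2 : z2 ∈ G) :
    triRatio G z1 z2 ≤ barrlund G p z1 z2 ∧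
      barrlund G p z1 z2 ≤ 2 ^ (1 - 1 / p) * triRatio G z1 z2 :=
  stmt0_general G p hp z1 z2
end

section
/- For any points z1, z2 in the open unit disk D of the complex plane, s_D(z1,z2) ≤ |z1-z2| / (2 - |z1+z2|), with equality if and only if z1, 0, z2 are collinear. -/
open Set Complex

/-- Triangular ratio metric of the unit disk. -/
noncomputable def sDisk (z1 z2 : ℂ) : ℝ :=
  sSup ((fun u => dist z1 z2 / (dist z1 u + dist z2 u)) '' {u : ℂ | ‖u‖ = 1})

private lemma collinear_aux {z1 z2 : ℂ} (t : ℝ) (h : z1 = t • z2) :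
    Collinear ℝ ({z1, 0, z2} : Set ℂ) := by
  rw [collinear_iff_of_mem (show (0:ℂ) ∈ ({z1,0,z2} : Set ℂ) by simp)]
  refine ⟨z2, ?_⟩
  rintro p hp
  simp only [mem_insert_iff, mem_singleton_iff] at hp
  rcases hp with rfl | rfl | rfl
  · exact ⟨t, by simp [h]⟩
  · exact ⟨0, by simp⟩
  · exact ⟨1, by simp⟩

private lemma collinear_aux2 (z1 : ℂ) : Collinear ℝ ({z1, 0, (0:ℂ)} : Set ℂ) := by
  have h : ({z1, 0, (0:ℂ)} : Set ℂ) = {z1, 0} := by simp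
  rw [h]; exact collinear_pair ℝ z1 0

theorem stmt2 (z1 z2 : ℂ) (hz1 : ‖z1‖ < 1) (hz2 : ‖z2‖ < 1) :
    sDisk z1 z2 ≤ ‖z1 - z2‖ / (2 - ‖z1 + z2‖) ∧
      (sDisk z1 z2 = ‖z1 - z2‖ / (2 - ‖z1 + z2‖) ↔
        Collinear ℝ ({z1, 0, z2} : Set ℂ)) := by
  set f : ℂ → ℝ := fun u => dist z1 z2 / (dist z1 u + dist z2 u) with hf
  set K : Set ℂ := {u : ℂ | ‖u‖ = 1} with hKdef
  set B : ℝ := ‖z1 - z2‖ / (2 - ‖z1 + z2‖) with hB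
  have hKne : K.Nonempty := ⟨1, by simp [hKdef]⟩
  have hpos : 0 < 2 - ‖z1 + z2‖ := by
    have h := norm_add_le z1 z2
    linarith
  have hchain1 : ∀ u : ℂ, ‖z1 + z2 - 2*u‖ ≤ dist z1 u + dist z2 u := by
    intro u
    rw [Complex.dist_eq, Complex.dist_eq]
    calc ‖z1 + z2 - 2*u‖ = ‖(z1 - u) + (z2 - u)‖ := by ring_nf
      _ ≤ _ := norm_add_le _ _
  have hchain2 : ∀ u ∈ K, 2 - ‖z1 + z2‖ ≤ ‖z1 + z2 - 2*u‖ := by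
    intro u hu
    have hu1 : ‖u‖ = 1 := hu
    have h2u : ‖2*u‖ = 2 := by rw [norm_mul]; simp [hu1]
    have h := norm_sub_norm_le (2*u) (z1 + z2)
    rw [h2u] at h
    calc 2 - ‖z1 + z2‖ ≤ ‖2*u - (z1+z2)‖ := h
      _ = ‖z1 + z2 - 2*u‖ := by
          rw [← norm_neg]; ring_nf
  have hden : ∀ u ∈ K, 2 - ‖z1 + z2‖ ≤ dist z1 u + dist z2 u :=
    fun u hu => (hchain2 u hu).trans (hchain1 u)
  have hle : ∀ x ∈ f '' K, x ≤ B := by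
    rintro x ⟨u, hu, rfl⟩
    rw [hf, hB]
    simp only
    rw [Complex.dist_eq]
    gcongr
    exact hden u hu
  have hbdd : BddAbove (f '' K) := ⟨B, hle⟩
  have hsup_le : sDisk z1 z2 ≤ B := csSup_le (hKne.image f) hle
  refine ⟨hsup_le, ?_, ?_⟩
  · -- equality → collinear
    intro heq
    have hKc : IsCompact K := by
      have h : K = Metric.sphere (0:ℂ) 1 := by
        ext u
        simp [hKdef, Complex.dist_eq]
      rw [h]
      exact isCompact_sphere 0 1
    have hcont : ContinuousOn f K := by
      apply ContinuousOn.div continuousOn_const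
      · exact ((Continuous.dist continuous_const continuous_id).add
          (Continuous.dist continuous_const continuous_id)).continuousOn
      · intro u hu
        exact ne_of_gt (lt_of_lt_of_le hpos (hden u hu))
    obtain ⟨u, huK, hmax⟩ := hKc.exists_isMaxOn hKne hcont
    have hgreat : IsGreatest (f '' K) (f u) :=
      ⟨mem_image_of_mem f huK, by rintro x ⟨v, hv, rfl⟩; exact hmax hv⟩
    have hfu : f u = B := by rw [← hgreat.csSup_eq]; exact heq
    by_cases h12 : z1 = z2
    · exact collinear_aux 1 (by simp [h12])
    have hnum : (0:ℝ) < ‖z1 - z2‖ := by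
      rw [norm_pos_iff]
      exact sub_ne_zero_of_ne h12
    have hdpos : 0 < dist z1 u + dist z2 u := lt_of_lt_of_le hpos (hden u huK)
    have hdeneq : dist z1 u + dist z2 u = 2 - ‖z1 + z2‖ := by
      rw [hf, hB] at hfu
      simp only at hfu
      rw [Complex.dist_eq z1 z2] at hfu
      rw [div_eq_div_iff hdpos.ne' hpos.ne'] at hfu
      exact mul_left_cancel₀ hnum.ne' (by linarith [hfu])
    have heq2 : ‖z1 + z2 - 2*u‖ = 2 - ‖z1 + z2‖ := by
      have l1 := hchain1 u
      have l2 := hchain2 u huK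
      linarith
    have heq1 : ‖(z1 - u) + (z2 - u)‖
        = ‖z1 - u‖ + ‖z2 - u‖ := by
      have l1 := hchain1 u
      rw [Complex.dist_eq, Complex.dist_eq] at hdeneq l1
      have h : ‖z1 + z2 - 2*u‖ = ‖z1 - u‖ + ‖z2 - u‖ := by
        linarith
      rw [← h]; ring_nf
    have hu1 : ‖u‖ = 1 := huK
    have hray1 : SameRay ℝ (z1 - u) (z2 - u) := by
      rw [sameRay_iff_norm_add]
      exact heq1
    have hray2 : SameRay ℝ (z1 + z2) (2*u - (z1 + z2)) := by
      rw [sameRay_iff_norm_add]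
      have h1 : z1 + z2 + (2*u - (z1 + z2)) = 2*u := by ring
      rw [h1]
      have h2u : ‖2*u‖ = 2 := by rw [norm_mul]; simp [hu1]
      have h2 : ‖2*u - (z1+z2)‖ = ‖z1 + z2 - 2*u‖ := by
        rw [← norm_neg]; ring_nf
      rw [h2u, h2, heq2]
      ring
    by_cases ha : z1 + z2 = 0
    · exact collinear_aux (-1) (by
        have h : z1 = -z2 := by linear_combination ha
        simp [h])
    · have hw : (2*u - (z1 + z2)) ≠ 0 := by
        intro h0
        have h : ‖z1 + z2 - 2*u‖ = 0 := by
          rw [← norm_neg]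
          rw [show -(z1 + z2 - 2*u) = 2*u - (z1+z2) by ring, h0, norm_zero]
        rw [heq2] at h
        linarith
      obtain ⟨r, hr, hra⟩ := hray2.exists_pos_right ha hw
      rw [Complex.real_smul] at hra
      set r' : ℝ := 2*r/(1+r) with hr'
      have h1r : (0:ℝ) < 1 + r := by linarith
      have hr'pos : 0 < r' := by positivity
      have hr'lt2 : r' < 2 := by
        rw [hr', div_lt_iff₀ h1r]
        linarith
      have hru : z1 + z2 = (r' : ℂ) * u := by
        have h1rc : (1:ℂ) + (r:ℂ) ≠ 0 := by
          intro h
          have h' : (1 + r : ℝ) = 0 := by exact_mod_cast h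
          linarith
        rw [hr']
        push_cast
        rw [div_mul_eq_mul_div, eq_div_iff h1rc]
        linear_combination hra
      have hz2u : z2 - u ≠ 0 := by
        intro h0
        have h : z2 = u := by linear_combination h0
        rw [h, hu1] at hz2
        linarith
      obtain ⟨c, hc, hcz⟩ := hray1.exists_nonneg_right hz2u
      rw [Complex.real_smul] at hcz
      have key : ((r':ℂ) - 1 + (c:ℂ)) * z1 = ((c:ℂ)*((r':ℂ)-1)+1) * z2 := by
        linear_combination (r':ℂ) * hcz + ((c:ℂ) - 1) * hru
      by_cases hco : r' - 1 + c = 0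
      · have hc2 : c = 1 - r' := by linarith
        have hcoef : (c*(r'-1)+1 : ℝ) = r'*(2-r') := by rw [hc2]; ring
        have hcoef' : (c*(r'-1)+1 : ℝ) ≠ 0 := by
          rw [hcoef]
          exact (mul_pos hr'pos (by linarith)).ne'
        have hz20 : z2 = 0 := by
          have h0 : ((r':ℂ) - 1 + (c:ℂ)) = 0 := by exact_mod_cast hco
          rw [h0, zero_mul] at key
          have hcc : ((c:ℂ)*((r':ℂ)-1)+1) ≠ 0 := by exact_mod_cast hcoef'
          exact (mul_eq_zero.mp key.symm).resolve_left hcc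
        rw [hz20]
        exact collinear_aux2 z1
      · apply collinear_aux ((c*(r'-1)+1)/(r'-1+c))
        rw [Complex.real_smul]
        have hcoc : ((r':ℂ) - 1 + (c:ℂ)) ≠ 0 := by exact_mod_cast hco
        push_cast
        rw [div_mul_eq_mul_div, eq_div_iff hcoc]
        linear_combination key
  · -- collinear → equality
    intro hcol
    obtain ⟨v, hv⟩ := (collinear_iff_of_mem
      (show (0:ℂ) ∈ ({z1,0,z2} : Set ℂ) by simp)).mp hcol
    obtain ⟨a, haa⟩ := hv z1 (by simp)
    obtain ⟨b, hbb⟩ := hv z2 (by simp)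
    simp only [vadd_eq_add, add_zero] at haa hbb
    rw [Complex.real_smul] at haa hbb
    suffices h : ∃ u0 ∈ K, f u0 = B by
      obtain ⟨u0, hu0, hfu0⟩ := h
      refine le_antisymm hsup_le ?_
      rw [← hfu0]
      exact le_csSup hbdd (mem_image_of_mem f hu0)
    by_cases h12 : z1 = z2
    · refine ⟨1, by simp [hKdef], ?_⟩
      rw [hf, hB, h12]
      simp
    have hvne : v ≠ 0 := by
      intro h0
      rw [h0, mul_zero] at haa hbb
      exact h12 (haa.trans hbb.symm)
    set av : ℝ := ‖v‖ with hav
    have havpos : 0 < av := by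
      rw [hav, norm_pos_iff]; exact hvne
    set e : ℂ := (av⁻¹ : ℝ) * v with he
    have havc : (av:ℂ) ≠ 0 := Complex.ofReal_ne_zero.mpr havpos.ne'
    have habse : ‖e‖ = 1 := by
      rw [he, norm_mul, Complex.norm_real, Real.norm_eq_abs, _root_.abs_inv, _root_.abs_of_pos havpos, ← hav]
      exact inv_mul_cancel₀ havpos.ne'
    set a' : ℝ := a * av with ha'
    set b' : ℝ := b * av with hb'
    have hz1e : z1 = (a' : ℂ) * e := by
      rw [haa, he, ha']
      push_cast
      field_simp
    have hz2e : z2 = (b' : ℂ) * e := by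
      rw [hbb, he, hb']
      push_cast
      field_simp
    have habs1 : |a'| < 1 := by
      have h : ‖z1‖ = |a'| := by
        rw [hz1e, norm_mul, habse, mul_one, Complex.norm_real, Real.norm_eq_abs]
      rw [← h]; exact hz1
    have habs2 : |b'| < 1 := by
      have h : ‖z2‖ = |b'| := by
        rw [hz2e, norm_mul, habse, mul_one, Complex.norm_real, Real.norm_eq_abs]
      rw [← h]; exact hz2
    have habs12 : ‖z1 + z2‖ = |a' + b'| := by
      rw [hz1e, hz2e, ← add_mul, ← Complex.ofReal_add, norm_mul, habse, mul_one,
        Complex.norm_real, Real.norm_eq_abs]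
    have ha1 : -1 < a' := (_root_.abs_lt.mp habs1).1
    have ha2 : a' < 1 := (_root_.abs_lt.mp habs1).2
    have hb1 : -1 < b' := (_root_.abs_lt.mp habs2).1
    have hb2 : b' < 1 := (_root_.abs_lt.mp habs2).2
    by_cases hsgn : 0 ≤ a' + b'
    · refine ⟨e, habse, ?_⟩
      rw [hf, hB]
      simp only
      rw [Complex.dist_eq, Complex.dist_eq, Complex.dist_eq]
      have hd1 : ‖z1 - e‖ = 1 - a' := by
        rw [hz1e, show (a':ℂ)*e - e = ((a' - 1 : ℝ):ℂ) * e by push_cast; ring,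
          norm_mul, habse, mul_one, Complex.norm_real, Real.norm_eq_abs, _root_.abs_of_nonpos (by linarith)]
        ring
      have hd2 : ‖z2 - e‖ = 1 - b' := by
        rw [hz2e, show (b':ℂ)*e - e = ((b' - 1 : ℝ):ℂ) * e by push_cast; ring,
          norm_mul, habse, mul_one, Complex.norm_real, Real.norm_eq_abs, _root_.abs_of_nonpos (by linarith)]
        ring
      rw [hd1, hd2, habs12, _root_.abs_of_nonneg hsgn]
      ring_nf
    · refine ⟨-e, by simpa [hKdef] using habse, ?_⟩
      rw [hf, hB]
      simp only
      rw [Complex.dist_eq, Complex.dist_eq, Complex.dist_eq]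
      have hd1 : ‖z1 - (-e)‖ = 1 + a' := by
        rw [hz1e, show (a':ℂ)*e - (-e) = ((a' + 1 : ℝ):ℂ) * e by push_cast; ring,
          norm_mul, habse, mul_one, Complex.norm_real, Real.norm_eq_abs, _root_.abs_of_nonneg (by linarith)]
        ring
      have hd2 : ‖z2 - (-e)‖ = 1 + b' := by
        rw [hz2e, show (b':ℂ)*e - (-e) = ((b' + 1 : ℝ):ℂ) * e by push_cast; ring,
          norm_mul, habse, mul_one, Complex.norm_real, Real.norm_eq_abs, _root_.abs_of_nonneg (by linarith)]
        ring
      rw [hd1, hd2, habs12, _root_.abs_of_neg (by linarith)]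
      ring_nf
end

section
/- For a proper subdomain D of R^n and points x, y ∈ D, the Barrlund distance with p = 2 satisfies b_{D,2}(x,y) = |x-y| / sqrt( 2·d_D((x+y)/2)² + |x-y|²/2 ), where d_D(z) = dist(z, ∂D). -/
/-!
By Apollonius's theorem, `|x - z|² + |z - y|² = 2 |m - z|² + |x - y|² / 2` where `m` is the
midpoint of `x` and `y`, so the quotient under the supremum is a decreasing function of `|m - z|`.
Its supremum over the closed set `∂D` is therefore attained at a boundary point nearest to `m`.
-/

open Set Metric

/-- Barrlund distance with parameter `2` in a domain `D`. -/
noncomputable def barrlund2 {n : ℕ} (D : Set (EuclideanSpace ℝ (Fin n)))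
    (x y : EuclideanSpace ℝ (Fin n)) : ℝ :=
  sSup ((fun z => dist x y / Real.sqrt (dist x z ^ 2 + dist z y ^ 2)) '' frontier D)

theorem IsClosed.sSup_image_comp_dist_eq_of_antitoneOn {α : Type*} [MetricSpace α] [ProperSpace α]
    {F : Set α} (hF : IsClosed F) (hne : F.Nonempty) (m : α) {g : ℝ → ℝ}
    (hg : AntitoneOn g (Ici (infDist m F))) :
    sSup ((fun z => g (dist m z)) '' F) = g (infDist m F) := by
  obtain ⟨z₀, hz₀, hdist⟩ := hF.exists_infDist_eq_dist hne m
  refine IsGreatest.csSup_eq ⟨⟨z₀, hz₀, by rw [hdist]⟩, ?_⟩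
  rintro _ ⟨z, hz, rfl⟩
  exact hg self_mem_Ici (infDist_le_dist_of_mem hz) (infDist_le_dist_of_mem hz)

theorem antitoneOn_div_sqrt_two_mul_sq_add_sq_div_two {c : ℝ} (hc : 0 ≤ c) :
    AntitoneOn (fun t => c / √(2 * t ^ 2 + c ^ 2 / 2)) (Ici 0) := by
  intro s (hs : 0 ≤ s) t _ hst
  rcases hc.eq_or_lt with rfl | hc
  · simp
  · exact div_le_div_of_nonneg_left hc.le (by positivity)
      (Real.sqrt_le_sqrt (by gcongr))

theorem stmt4_general {n : ℕ} (D : Set (EuclideanSpace ℝ (Fin n)))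
    (hDne : D ≠ univ)
    (x y : EuclideanSpace ℝ (Fin n)) (hx : x ∈ D) :
    barrlund2 D x y =
      dist x y /
        Real.sqrt (2 * infDist ((2⁻¹ : ℝ) • (x + y)) (frontier D) ^ 2 + dist x y ^ 2 / 2) := by
  have hmid : (2⁻¹ : ℝ) • (x + y) = midpoint ℝ x y := by
    rw [midpoint_eq_smul_add, invOf_eq_inv]
  have apollonius (z : EuclideanSpace ℝ (Fin n)) :
      dist x z ^ 2 + dist z y ^ 2 = 2 * dist (midpoint ℝ x y) z ^ 2 + dist x y ^ 2 / 2 := by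
    rw [dist_comm x z, dist_comm _ z,
      EuclideanGeometry.dist_sq_add_dist_sq_eq_two_mul_dist_midpoint_sq_add_half_dist_sq]
    ring
  rw [hmid, barrlund2]
  simp_rw [apollonius]
  exact isClosed_frontier.sSup_image_comp_dist_eq_of_antitoneOn
    (nonempty_frontier_iff.2 ⟨⟨x, hx⟩, hDne⟩) _
    ((antitoneOn_div_sqrt_two_mul_sq_add_sq_div_two dist_nonneg).mono
      fun _ ht => infDist_nonneg.trans ht)

theorem stmt4 {n : ℕ} (D : Set (EuclideanSpace ℝ (Fin n)))
    (hD : IsOpen D) (hDc : IsConnected D) (hDne : D ≠ univ)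
    (x y : EuclideanSpace ℝ (Fin n)) (hx : x ∈ D) (hy : y ∈ D) :
    barrlund2 D x y =
      dist x y /
        Real.sqrt (2 * infDist ((2⁻¹ : ℝ) • (x + y)) (frontier D) ^ 2 + dist x y ^ 2 / 2) :=
  stmt4_general D hDne x y hx
end

section
/- Let G1 ⊂ G ⊊ R^n be domains such that G1 is midpoint convex. Then b_{G1,∞}(x,y) ≥ b_{G,∞}(x,y) for all x, y ∈ G1, where b_{D,∞}(x,y) = sup_{z ∈ ∂D} |x-y| / max{|x-z|, |y-z|}. -/
/-!
For `z ∈ ∂G` we have `z ∉ G1`, while the midpoint `m` of `x` and `y` lies in `G1`; so the segment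
`[m, z]` crosses `∂G1` at some `w`. The function `max (|x - ·|) (|y - ·|)` is convex and its value
`|x - y| / 2` at `m` is at most its value at `z`, hence it is no larger at `w` than at `z`, and the
ratio `|x - y| / max (|x - w|, |y - w|)` dominates the one at `z`.
-/

open Set

/-- Barrlund distance with parameter `∞` in a domain `D`. -/
noncomputable def barrlundInf {n : ℕ} (D : Set (EuclideanSpace ℝ (Fin n)))
    (x y : EuclideanSpace ℝ (Fin n)) : ℝ :=
  sSup ((fun z => dist x y / max (dist x z) (dist y z)) '' frontier D)

theorem IsPreconnected.inter_frontier_nonempty {X : Type*} [TopologicalSpace X] {s t : Set X}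
    (hs : IsPreconnected s) (hst : (s ∩ t).Nonempty) (hst' : (s \ t).Nonempty) :
    (s ∩ frontier t).Nonempty := by
  by_contra! h
  have hcover : s ⊆ interior t ∪ (closure t)ᶜ := fun p hp => by
    by_contra! hp'
    exact h.subset ⟨hp, not_not.mp (mt Or.inr hp'), mt Or.inl hp'⟩
  obtain ⟨a, has, hat⟩ := hst
  obtain ⟨b, hbs, hbt⟩ := hst'
  obtain ⟨p, -, hp, hp'⟩ := hs _ _ isOpen_interior isClosed_closure.isOpen_compl hcover
    ⟨a, has, (hcover has).resolve_right (not_not.mpr (subset_closure hat))⟩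
    ⟨b, hbs, (hcover hbs).resolve_left (mt (interior_subset ·) hbt)⟩
  exact hp' (interior_subset_closure hp)

section PseudoMetric

variable {X : Type*} [PseudoMetricSpace X]

theorem dist_le_two_mul_max_dist (x y z : X) :
    dist x y ≤ 2 * max (dist x z) (dist y z) := by
  calc dist x y ≤ dist x z + dist y z := dist_triangle_right x y z
    _ ≤ 2 * max (dist x z) (dist y z) := by
      linarith [le_max_left (dist x z) (dist y z), le_max_right (dist x z) (dist y z)]

theorem dist_div_max_dist_le_two (x y z : X) :
    dist x y / max (dist x z) (dist y z) ≤ 2 :=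
  div_le_of_le_mul₀ (le_max_of_le_left dist_nonneg) zero_le_two
    (dist_le_two_mul_max_dist x y z)

theorem dist_div_max_dist_le_of_max_dist_le {x y z w : X}
    (h : max (dist x w) (dist y w) ≤ max (dist x z) (dist y z)) :
    dist x y / max (dist x z) (dist y z) ≤ dist x y / max (dist x w) (dist y w) := by
  rcases (le_max_of_le_left dist_nonneg : 0 ≤ max (dist x w) (dist y w)).eq_or_lt with hw | hw
  · have hxy : dist x y = 0 :=
      le_antisymm (by simpa [← hw] using dist_le_two_mul_max_dist x y w) dist_nonneg
    simp [hxy]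
  · exact div_le_div_of_nonneg_left dist_nonneg hw h

end PseudoMetric

section NormedSpace

variable {E : Type*} [SeminormedAddCommGroup E] [NormedSpace ℝ E]

theorem max_dist_le_of_mem_segment_midpoint {x y z w : E}
    (hw : w ∈ segment ℝ (midpoint ℝ x y) z) :
    max (dist x w) (dist y w) ≤ max (dist x z) (dist y z) := by
  have hmid : max (dist x (midpoint ℝ x y)) (dist y (midpoint ℝ x y)) ≤
      max (dist x z) (dist y z) := by
    rw [dist_left_midpoint, dist_right_midpoint, max_self, Real.norm_two]
    linarith [dist_le_two_mul_max_dist x y z]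
  have hconvex : ConvexOn ℝ univ fun p => max (dist x p) (dist y p) := by
    simpa only [Pi.sup_def, dist_comm] using (convexOn_univ_dist x).sup (convexOn_univ_dist y)
  exact (hconvex.le_on_segment (mem_univ _) (mem_univ _) hw).trans (max_le hmid le_rfl)

theorem exists_mem_frontier_max_dist_le {s : Set E} {x y z : E}
    (hm : midpoint ℝ x y ∈ s) (hz : z ∉ s) :
    ∃ w ∈ frontier s, max (dist x w) (dist y w) ≤ max (dist x z) (dist y z) :=
  let ⟨w, hw, hws⟩ := (convex_segment _ _).isPreconnected.inter_frontier_nonempty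
    ⟨_, left_mem_segment ℝ _ _, hm⟩ ⟨_, right_mem_segment ℝ _ _, hz⟩
  ⟨w, hws, max_dist_le_of_mem_segment_midpoint hw⟩

end NormedSpace

section Barrlund

variable {n : ℕ} (D : Set (EuclideanSpace ℝ (Fin n))) (x y : EuclideanSpace ℝ (Fin n))

theorem barrlundInf_nonneg : 0 ≤ barrlundInf D x y :=
  Real.sSup_nonneg <| by rintro _ ⟨z, -, rfl⟩; positivity

variable {D x y} in
theorem le_barrlundInf {z : EuclideanSpace ℝ (Fin n)} (hz : z ∈ frontier D) :
    dist x y / max (dist x z) (dist y z) ≤ barrlundInf D x y :=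
  le_csSup ⟨2, by rintro _ ⟨w, -, rfl⟩; exact dist_div_max_dist_le_two x y w⟩ ⟨z, hz, rfl⟩

end Barrlund

theorem stmt6_general {n : ℕ} (G1 G : Set (EuclideanSpace ℝ (Fin n)))
    (hG : IsOpen G) (hsub : G1 ⊆ G)
    (hmid : ∀ x ∈ G1, ∀ y ∈ G1, (2⁻¹ : ℝ) • (x + y) ∈ G1)
    (x y : EuclideanSpace ℝ (Fin n)) (hx : x ∈ G1) (hy : y ∈ G1) :
    barrlundInf G x y ≤ barrlundInf G1 x y := by
  have hm : midpoint ℝ x y ∈ G1 := by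
    simpa only [midpoint_eq_smul_add, invOf_eq_inv] using hmid x hx y hy
  refine Real.sSup_le ?_ (barrlundInf_nonneg G1 x y)
  rintro _ ⟨z, hz, rfl⟩
  have hzG1 : z ∉ G1 := fun h => (hG.frontier_eq ▸ hz).2 (hsub h)
  obtain ⟨w, hw, hle⟩ := exists_mem_frontier_max_dist_le hm hzG1
  exact (dist_div_max_dist_le_of_max_dist_le hle).trans (le_barrlundInf hw)

theorem stmt6 {n : ℕ} (G1 G : Set (EuclideanSpace ℝ (Fin n)))
    (hG1 : IsOpen G1) (hG1c : IsConnected G1)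
    (hG : IsOpen G) (hGc : IsConnected G) (hGne : G ≠ univ) (hsub : G1 ⊆ G)
    (hmid : ∀ x ∈ G1, ∀ y ∈ G1, (2⁻¹ : ℝ) • (x + y) ∈ G1)
    (x y : EuclideanSpace ℝ (Fin n)) (hx : x ∈ G1) (hy : y ∈ G1) :
    barrlundInf G x y ≤ barrlundInf G1 x y :=
  stmt6_general G1 G hG hsub hmid x y hx hy
end

section
/- Let G be a proper subdomain of R^n, p ≥ 1, and suppose there exist z1, z2 ∈ G and z0 ∈ ∂G with z0 = (z1+z2)/2. Then b_{G,p}(z1,z2) = 2^{1-1/p}. -/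
open Set

lemma aux_rpow_ineq (a b p : ℝ) (ha : 0 ≤ a) (hb : 0 ≤ b) (hp : 1 ≤ p) :
    (a + b) ^ p ≤ 2 ^ (p - 1) * (a ^ p + b ^ p) := by
  lift a to NNReal using ha
  lift b to NNReal using hb
  exact_mod_cast NNReal.rpow_add_le_mul_rpow_add_rpow a b hp

theorem stmt8 {n : ℕ} (G : Set (EuclideanSpace ℝ (Fin n)))
    (hG : IsOpen G) (hGc : IsConnected G) (hGne : G ≠ univ)
    (p : ℝ) (hp : 1 ≤ p) (z1 z2 z0 : EuclideanSpace ℝ (Fin n))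
    (hz1 : z1 ∈ G) (hz2 : z2 ∈ G) (hz0 : z0 ∈ frontier G)
    (hmid : z0 = (2⁻¹ : ℝ) • (z1 + z2)) :
    barrlund G p z1 z2 = 2 ^ (1 - 1 / p) := by
  have hz0G : z0 ∉ G := by
    rw [hG.frontier_eq] at hz0; exact hz0.2
  have hne : z1 ≠ z2 := by
    rintro rfl
    apply hz0G
    have : z0 = z1 := by rw [hmid, ← two_smul ℝ z1, smul_smul]; norm_num
    rwa [this]
  have hd : 0 < dist z1 z2 := dist_pos.mpr hne
  have hp0 : 0 < p := lt_of_lt_of_le zero_lt_one hp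
  have hmid' : z0 = midpoint ℝ z1 z2 := by
    rw [hmid, midpoint_eq_smul_add, invOf_eq_inv]
  have hd1 : dist z1 z0 = dist z1 z2 / 2 := by
    rw [hmid', dist_left_midpoint]
    simp [Real.norm_two]
    ring
  have hd2 : dist z0 z2 = dist z1 z2 / 2 := by
    rw [hmid', dist_comm, dist_right_midpoint]
    simp [Real.norm_two]
    rw [dist_comm]
    ring
  have hppos : (0:ℝ) < 1 / p := by positivity
  -- value at z0
  have hval : dist z1 z2 / (dist z1 z0 ^ p + dist z0 z2 ^ p) ^ (1 / p) = 2 ^ (1 - 1/p) := by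
    rw [hd1, hd2]
    have h2 : (dist z1 z2 / 2) ^ p + (dist z1 z2 / 2) ^ p = 2 * (dist z1 z2 / 2) ^ p := by ring
    rw [h2, Real.mul_rpow (by norm_num) (Real.rpow_nonneg (by positivity) p),
      ← Real.rpow_mul (by positivity),
      mul_one_div_cancel hp0.ne', Real.rpow_one,
      Real.rpow_sub two_pos, Real.rpow_one]
    have h2p : (0:ℝ) < (2:ℝ) ^ (1/p) := Real.rpow_pos_of_pos two_pos _
    field_simp
  apply IsGreatest.csSup_eq
  constructor
  · exact ⟨z0, hz0, hval⟩
  · rintro x ⟨z, hz, rfl⟩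
    set a := dist z1 z with ha
    set b := dist z z2 with hb
    have htri : dist z1 z2 ≤ a + b := dist_triangle z1 z z2
    have hab : 0 < a + b := lt_of_lt_of_le hd htri
    have ha0 : 0 ≤ a := dist_nonneg
    have hb0 : 0 ≤ b := dist_nonneg
    have hpow : 0 < a ^ p + b ^ p := by
      rcases lt_or_ge 0 a with ha' | ha'
      · exact add_pos_of_pos_of_nonneg (Real.rpow_pos_of_pos ha' p)
          (Real.rpow_nonneg hb0 p)
      · have haz : a = 0 := le_antisymm ha' ha0
        have hb' : 0 < b := by rw [haz, zero_add] at hab; exact hab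
        exact add_pos_of_nonneg_of_pos (Real.rpow_nonneg ha0 p)
          (Real.rpow_pos_of_pos hb' p)
    have key : a + b ≤ 2 ^ (1 - 1/p) * (a ^ p + b ^ p) ^ (1/p) := by
      have h1 : (a + b) ^ p ≤ 2 ^ (p - 1) * (a ^ p + b ^ p) :=
        aux_rpow_ineq a b p ha0 hb0 hp
      have h2 := Real.rpow_le_rpow (Real.rpow_nonneg (by positivity) p) h1 hppos.le
      rwa [← Real.rpow_mul (by positivity), mul_one_div_cancel hp0.ne', Real.rpow_one,
        Real.mul_rpow (Real.rpow_nonneg (by norm_num) _) hpow.le,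
        ← Real.rpow_mul (by norm_num), sub_mul, one_mul,
        mul_one_div_cancel hp0.ne'] at h2
    have hdenom : 0 < (a ^ p + b ^ p) ^ (1/p) := Real.rpow_pos_of_pos hpow _
    rw [div_le_iff₀ hdenom]
    exact le_trans (le_trans htri key) (le_of_eq rfl)
end

section
/- For the upper half plane H = {z ∈ ℂ : Im z > 0} and points z1, z2 ∈ H, the Barrlund distance with p = 2 equals b_{H,2}(z1,z2) = √2 |z1-z2| / sqrt( |z1-z2|² + (Im(z1)+Im(z2))² ). -/
/-- Barrlund distance with parameter `2` in the upper half plane. -/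
noncomputable def barrlundH2 (z1 z2 : ℂ) : ℝ :=
  sSup (Set.range fun t : ℝ =>
    dist z1 z2 / Real.sqrt (dist z1 (t : ℂ) ^ 2 + dist (t : ℂ) z2 ^ 2))

theorem stmt9 (z1 z2 : ℂ) (hz1 : 0 < z1.im) (hz2 : 0 < z2.im) :
    barrlundH2 z1 z2 =
      Real.sqrt 2 * ‖z1 - z2‖ /
        Real.sqrt (‖z1 - z2‖ ^ 2 + (z1.im + z2.im) ^ 2) := by
  set a := z1.re with ha
  set b := z1.im with hb
  set c := z2.re with hc
  set e := z2.im with he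
  set m : ℝ := (a - c) ^ 2 / 2 + b ^ 2 + e ^ 2 with hm
  have hmpos : 0 < m := by
    have h1 : 0 < b ^ 2 := pow_pos hz1 2
    have h2 : (0:ℝ) ≤ (a - c) ^ 2 := sq_nonneg _
    have h3 : (0:ℝ) ≤ e ^ 2 := sq_nonneg _
    rw [hm]; nlinarith
  have key : ∀ t : ℝ, dist z1 (t : ℂ) ^ 2 + dist (t : ℂ) z2 ^ 2
      = m + 2 * (t - (a + c) / 2) ^ 2 := by
    intro t
    rw [Complex.dist_eq, Complex.dist_eq, Complex.sq_norm, Complex.sq_norm,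
      Complex.normSq_apply, Complex.normSq_apply]
    simp only [Complex.sub_re, Complex.sub_im, Complex.ofReal_re, Complex.ofReal_im,
      ← ha, ← hb, ← hc, ← he, hm]
    ring
  have h2m : ‖z1 - z2‖ ^ 2 + (b + e) ^ 2 = 2 * m := by
    rw [Complex.sq_norm, Complex.normSq_apply]
    simp only [Complex.sub_re, Complex.sub_im, ← ha, ← hb, ← hc, ← he, hm]
    ring
  have htarget : Real.sqrt 2 * ‖z1 - z2‖ /
      Real.sqrt (‖z1 - z2‖ ^ 2 + (b + e) ^ 2)
      = ‖z1 - z2‖ / Real.sqrt m := by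
    rw [h2m, Real.sqrt_mul (by norm_num : (0:ℝ) ≤ 2) m,
      mul_div_mul_left _ _ (by positivity : Real.sqrt 2 ≠ 0)]
  rw [htarget]
  apply IsGreatest.csSup_eq
  constructor
  · refine ⟨(a + c) / 2, ?_⟩
    show dist z1 z2 / Real.sqrt (dist z1 _ ^ 2 + dist _ z2 ^ 2) = _
    rw [key, Complex.dist_eq]
    norm_num
  · rintro x ⟨t, rfl⟩
    show dist z1 z2 / Real.sqrt (dist z1 _ ^ 2 + dist _ z2 ^ 2) ≤ _
    rw [Complex.dist_eq, key]
    apply div_le_div_of_nonneg_left (by positivity) (Real.sqrt_pos.mpr hmpos)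
    apply Real.sqrt_le_sqrt
    nlinarith [sq_nonneg (t - (a + c) / 2)]
end

section
/- For points z1, z2 in the open unit disk D of ℂ, the Barrlund distance with p = 2 equals b_{D,2}(z1,z2) = |z1-z2| / sqrt( 2 + |z1|² + |z2|² - 2|z1+z2| ). -/
/-- Barrlund distance with parameter `2` in the unit disk. -/
noncomputable def barrlundD2 (z1 z2 : ℂ) : ℝ :=
  sSup ((fun u => dist z1 z2 / Real.sqrt (dist z1 u ^ 2 + dist u z2 ^ 2)) ''
    {u : ℂ | ‖u‖ = 1})

theorem stmt10 (z1 z2 : ℂ) (hz1 : ‖z1‖ < 1) (hz2 : ‖z2‖ < 1) :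
    barrlundD2 z1 z2 =
      ‖z1 - z2‖ /
        Real.sqrt (2 + ‖z1‖ ^ 2 + ‖z2‖ ^ 2
          - 2 * ‖z1 + z2‖) := by
  set D : ℝ := 2 + ‖z1‖ ^ 2 + ‖z2‖ ^ 2 - 2 * ‖z1 + z2‖ with hD
  have habs : ‖z1 + z2‖ ≤ ‖z1‖ + ‖z2‖ := norm_add_le z1 z2
  have hDpos : 0 < D := by nlinarith [norm_nonneg z1, norm_nonneg z2]
  have key : ∀ u : ℂ, ‖u‖ = 1 →
      dist z1 u ^ 2 + dist u z2 ^ 2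
        = 2 + ‖z1‖ ^ 2 + ‖z2‖ ^ 2 - 2 * ((starRingEnd ℂ) u * (z1 + z2)).re := by
    intro u hu
    have hu2 : u.re * u.re + u.im * u.im = 1 := by
      have h := Complex.sq_norm u
      rw [hu] at h
      simpa [Complex.normSq_apply] using h.symm
    simp only [Complex.dist_eq, Complex.sq_norm, Complex.normSq_apply, Complex.sub_re,
      Complex.sub_im, Complex.add_re, Complex.add_im, Complex.mul_re, Complex.conj_re,
      Complex.conj_im]
    nlinarith [hu2]
  -- each term in denominator is ≥ D
  have hge : ∀ u : ℂ, ‖u‖ = 1 → D ≤ dist z1 u ^ 2 + dist u z2 ^ 2 := by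
    intro u hu
    rw [key u hu]
    have h1 : ((starRingEnd ℂ) u * (z1 + z2)).re ≤ ‖z1 + z2‖ := by
      calc ((starRingEnd ℂ) u * (z1 + z2)).re ≤ ‖(starRingEnd ℂ) u * (z1 + z2)‖ :=
            Complex.re_le_norm _
        _ = ‖z1 + z2‖ := by
            rw [norm_mul, Complex.norm_conj, hu, one_mul]
    simp only [hD]; linarith
  -- witness
  obtain ⟨u0, hu0, heq⟩ : ∃ u0 : ℂ, ‖u0‖ = 1 ∧
      ((starRingEnd ℂ) u0 * (z1 + z2)).re = ‖z1 + z2‖ := by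
    by_cases hw : z1 + z2 = 0
    · exact ⟨1, by simp, by simp [hw]⟩
    · have hr : (‖z1 + z2‖ : ℂ) ≠ 0 := by
        exact_mod_cast norm_ne_zero_iff.mpr hw
      refine ⟨(z1 + z2) / ‖z1 + z2‖, ?_, ?_⟩
      · simp [norm_div, Complex.norm_real, abs_of_nonneg (norm_nonneg _),
          div_self (norm_ne_zero_iff.mpr hw)]
      · have h2 : (starRingEnd ℂ) ((z1 + z2) / (‖z1 + z2‖ : ℂ)) * (z1 + z2)
            = (‖z1 + z2‖ : ℂ) := by
          rw [map_div₀, Complex.conj_ofReal, div_mul_eq_mul_div, mul_comm, Complex.mul_conj,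
            Complex.normSq_eq_norm_sq]
          push_cast
          field_simp
        rw [h2, Complex.ofReal_re]
  have hden0 : dist z1 u0 ^ 2 + dist u0 z2 ^ 2 = D := by
    rw [key u0 hu0, heq]
  have hgreat : IsGreatest
      ((fun u => dist z1 z2 / Real.sqrt (dist z1 u ^ 2 + dist u z2 ^ 2)) ''
        {u : ℂ | ‖u‖ = 1})
      (‖z1 - z2‖ / Real.sqrt D) := by
    constructor
    · refine ⟨u0, hu0, ?_⟩
      show dist z1 z2 / Real.sqrt (dist z1 u0 ^ 2 + dist u0 z2 ^ 2)
          = ‖z1 - z2‖ / Real.sqrt D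
      rw [hden0, Complex.dist_eq]
    · rintro y ⟨u, hu, rfl⟩
      show dist z1 z2 / Real.sqrt (dist z1 u ^ 2 + dist u z2 ^ 2)
          ≤ ‖z1 - z2‖ / Real.sqrt D
      rw [Complex.dist_eq]
      have h1 : Real.sqrt D ≤ Real.sqrt (dist z1 u ^ 2 + dist u z2 ^ 2) :=
        Real.sqrt_le_sqrt (hge u hu)
      gcongr
  unfold barrlundD2
  exact hgreat.csSup_eq
end

section
/- For z1, z2 ∈ H with Re(z1) = Re(z2), the Barrlund distance with parameter p ≥ 1 equals b_{H,p}(z1,z2) = |Im(z1) - Im(z2)| / (Im(z1)^p + Im(z2)^p)^{1/p}. -/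
/-!
A real point `t` is at distance at least `|Im z|` from `z`, with equality at `t = Re z`; so when
`z1` and `z2` share their real part, the supremum defining the Barrlund distance is attained there.
-/

/-- Barrlund distance with parameter `p` in the upper half plane. -/
noncomputable def barrlundH (p : ℝ) (z1 z2 : ℂ) : ℝ :=
  sSup (Set.range fun t : ℝ =>
    dist z1 z2 / (dist z1 (t : ℂ) ^ p + dist (t : ℂ) z2 ^ p) ^ (1 / p))

namespace Complex

lemma abs_im_le_dist_ofReal (z : ℂ) (t : ℝ) : |z.im| ≤ dist z t := by
  simpa [dist_eq] using abs_im_le_norm (z - t)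

lemma dist_ofReal_re (z : ℂ) : dist z z.re = |z.im| := by
  rw [dist_of_re_eq (ofReal_re _).symm, Real.dist_eq, ofReal_im, sub_zero]

end Complex

section Barrlund

variable {p : ℝ} {z1 z2 : ℂ}

lemma barrlund_quotient_le (hp : 0 ≤ p) (hz1 : z1.im ≠ 0) (t : ℝ) :
    dist z1 z2 / (dist z1 (t : ℂ) ^ p + dist (t : ℂ) z2 ^ p) ^ (1 / p) ≤
      dist z1 z2 / (|z1.im| ^ p + |z2.im| ^ p) ^ (1 / p) := by
  gcongr
  · exact Complex.abs_im_le_dist_ofReal z1 t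
  · rw [dist_comm]
    exact Complex.abs_im_le_dist_ofReal z2 t

lemma barrlund_quotient_at_re (hre : z1.re = z2.re) :
    dist z1 z2 / (dist z1 (z1.re : ℂ) ^ p + dist (z1.re : ℂ) z2 ^ p) ^ (1 / p) =
      dist z1 z2 / (|z1.im| ^ p + |z2.im| ^ p) ^ (1 / p) := by
  rw [Complex.dist_ofReal_re, hre, dist_comm (z2.re : ℂ), Complex.dist_ofReal_re]

lemma barrlundH_eq_of_re_eq (hp : 0 ≤ p) (hz1 : z1.im ≠ 0) (hre : z1.re = z2.re) :
    barrlundH p z1 z2 = dist z1 z2 / (|z1.im| ^ p + |z2.im| ^ p) ^ (1 / p) := by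
  refine IsGreatest.csSup_eq ⟨⟨z1.re, barrlund_quotient_at_re hre⟩, ?_⟩
  rintro _ ⟨t, rfl⟩
  exact barrlund_quotient_le hp hz1 t

end Barrlund

theorem stmt13 (z1 z2 : ℂ) (hz1 : 0 < z1.im) (hz2 : 0 < z2.im)
    (hre : z1.re = z2.re) (p : ℝ) (hp : 1 ≤ p) :
    barrlundH p z1 z2 = |z1.im - z2.im| / (z1.im ^ p + z2.im ^ p) ^ (1 / p) := by
  rw [barrlundH_eq_of_re_eq (zero_le_one.trans hp) hz1.ne' hre, Complex.dist_of_re_eq hre,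
    Real.dist_eq, abs_of_pos hz1, abs_of_pos hz2]
end

section
/- For distinct nonzero z1, z2 in the open unit disk D of ℂ and p ≥ 1, one has b_{D,p}(z1, z2) < b_{ℂ\bar{D}, p}(1/z1, 1/z2), where the second Barrlund distance is taken in the exterior of the closed unit disk (both boundaries equal the unit circle). -/
open Real

/-- Barrlund-type distance taken over the unit circle. -/
noncomputable def barrlundCircle (p : ℝ) (w1 w2 : ℂ) : ℝ :=
  sSup ((fun u => dist w1 w2 / (dist w1 u ^ p + dist u w2 ^ p) ^ (1 / p)) ''
    {u : ℂ | ‖u‖ = 1})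

lemma real_key (p : ℝ) (hp : 1 ≤ p) (a b A B d : ℝ)
    (ha : 0 < a) (ha1 : a < 1) (hb : 0 < b) (hb1 : b < 1)
    (hA : 0 < A) (hB : 0 < B) (hd : 0 < d) :
    d / (A ^ p + B ^ p) ^ (1/p) < (d / (a * b)) / ((A / a) ^ p + (B / b) ^ p) ^ (1/p) := by
  have hp0 : 0 < p := lt_of_lt_of_le one_pos hp
  have habpos : 0 < a * b := mul_pos ha hb
  have hS : 0 < (A / a) ^ p + (B / b) ^ p :=
    add_pos (Real.rpow_pos_of_pos (div_pos hA ha) p) (Real.rpow_pos_of_pos (div_pos hB hb) p)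
  rw [div_div]
  have key : (a * b) * ((A / a) ^ p + (B / b) ^ p) ^ (1/p)
      = ((A * b) ^ p + (B * a) ^ p) ^ (1/p) := by
    have h1 : (a * b) = ((a * b) ^ p) ^ (1/p) := by
      rw [one_div, Real.rpow_rpow_inv habpos.le hp0.ne']
    rw [h1, ← Real.mul_rpow (Real.rpow_nonneg habpos.le p) hS.le]
    congr 1
    rw [mul_add, ← Real.mul_rpow habpos.le (div_nonneg hA.le ha.le),
      ← Real.mul_rpow habpos.le (div_nonneg hB.le hb.le)]
    congr 2 <;> field_simp <;> ring
  rw [key]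
  have hlt : (A * b) ^ p + (B * a) ^ p < A ^ p + B ^ p := by
    have h1 : (A * b) ^ p < A ^ p := by
      rw [Real.mul_rpow hA.le hb.le]
      calc A ^ p * b ^ p < A ^ p * 1 :=
            mul_lt_mul_of_pos_left (Real.rpow_lt_one hb.le hb1 hp0)
              (Real.rpow_pos_of_pos hA p)
        _ = A ^ p := mul_one _
    have h2 : (B * a) ^ p < B ^ p := by
      rw [Real.mul_rpow hB.le ha.le]
      calc B ^ p * a ^ p < B ^ p * 1 :=
            mul_lt_mul_of_pos_left (Real.rpow_lt_one ha.le ha1 hp0)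
              (Real.rpow_pos_of_pos hB p)
        _ = B ^ p := mul_one _
    exact add_lt_add h1 h2
  have hpos : 0 < ((A * b) ^ p + (B * a) ^ p) ^ (1/p) :=
    Real.rpow_pos_of_pos (add_pos (Real.rpow_pos_of_pos (mul_pos hA hb) p)
      (Real.rpow_pos_of_pos (mul_pos hB ha) p)) _
  exact div_lt_div_of_pos_left hd hpos
    (Real.rpow_lt_rpow (by positivity) hlt (by positivity))

lemma conj_dist_aux (z v : ℂ) (hz : z ≠ 0) (hv : ‖v‖ = 1) :
    dist (1 / z) (starRingEnd ℂ v) = dist z v / ‖z‖ := by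
  have hv0 : v ≠ 0 := by
    intro h; rw [h] at hv; simp at hv
  have hvc : v * starRingEnd ℂ v = 1 := by
    rw [Complex.mul_conj]
    norm_cast
    rw [← Complex.sq_norm, hv]; norm_num
  have h1 : 1 / z - starRingEnd ℂ v = (v - z) / (z * v) := by
    field_simp
    linear_combination (-z) * hvc
  rw [Complex.dist_eq, Complex.dist_eq, h1, norm_div, norm_mul, hv, mul_one,
    norm_sub_rev]

lemma inv_dist_aux (z1 z2 : ℂ) (h1 : z1 ≠ 0) (h2 : z2 ≠ 0) :
    dist (1 / z1) (1 / z2) = dist z1 z2 / (‖z1‖ * ‖z2‖) := by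
  have h : 1 / z1 - 1 / z2 = (z2 - z1) / (z1 * z2) := by field_simp
  rw [Complex.dist_eq, Complex.dist_eq, h, norm_div, norm_mul, norm_sub_rev]

lemma pointwise_key (p : ℝ) (hp : 1 ≤ p) (z1 z2 v : ℂ)
    (hz1 : ‖z1‖ < 1) (hz2 : ‖z2‖ < 1)
    (hz1ne : z1 ≠ 0) (hz2ne : z2 ≠ 0) (hne : z1 ≠ z2) (hv : ‖v‖ = 1) :
    dist z1 z2 / (dist z1 v ^ p + dist v z2 ^ p) ^ (1/p)
      < dist (1/z1) (1/z2) /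
        (dist (1/z1) (starRingEnd ℂ v) ^ p + dist (starRingEnd ℂ v) (1/z2) ^ p) ^ (1/p) := by
  have ha : 0 < ‖z1‖ := by simpa using hz1ne
  have hb : 0 < ‖z2‖ := by simpa using hz2ne
  have hA : 0 < dist z1 v := dist_pos.2 (by intro h; rw [h, hv] at hz1; exact lt_irrefl 1 hz1)
  have hB : 0 < dist v z2 := dist_pos.2 (by intro h; rw [← h, hv] at hz2; exact lt_irrefl 1 hz2)
  have hd : 0 < dist z1 z2 := dist_pos.2 hne
  have e1 : dist (1/z1) (starRingEnd ℂ v) = dist z1 v / ‖z1‖ :=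
    conj_dist_aux z1 v hz1ne hv
  have e2 : dist (starRingEnd ℂ v) (1/z2) = dist v z2 / ‖z2‖ := by
    rw [dist_comm, conj_dist_aux z2 v hz2ne hv, dist_comm]
  rw [e1, e2, inv_dist_aux z1 z2 hz1ne hz2ne]
  exact real_key p hp _ _ _ _ _ ha hz1 hb hz2 hA hB hd

lemma contOn_aux (p : ℝ) (hp : 0 < p) (w1 w2 : ℂ) (h1 : ‖w1‖ ≠ 1) :
    ContinuousOn (fun u => dist w1 w2 / (dist w1 u ^ p + dist u w2 ^ p) ^ (1 / p))
      {u : ℂ | ‖u‖ = 1} := by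
  have hden : ContinuousOn (fun u : ℂ => (dist w1 u ^ p + dist u w2 ^ p) ^ (1 / p))
      {u : ℂ | ‖u‖ = 1} := by
    apply ContinuousOn.rpow_const
    · exact (((continuous_const.dist continuous_id).continuousOn.rpow_const
        (fun x _ => Or.inr hp.le)).add
        ((continuous_id.dist continuous_const).continuousOn.rpow_const
        (fun x _ => Or.inr hp.le)))
    · intro x _; exact Or.inr (by positivity)
  apply ContinuousOn.div continuousOn_const hden
  intro u hu
  have hne : w1 ≠ u := by
    intro h; rw [h] at h1; exact h1 hu
  have : 0 < dist w1 u ^ p + dist u w2 ^ p := by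
    have := Real.rpow_pos_of_pos (dist_pos.2 hne) p
    have h2 : (0:ℝ) ≤ dist u w2 ^ p := Real.rpow_nonneg dist_nonneg p
    linarith
  positivity

theorem stmt15 (p : ℝ) (hp : 1 ≤ p) (z1 z2 : ℂ)
    (hz1 : ‖z1‖ < 1) (hz2 : ‖z2‖ < 1)
    (hz1ne : z1 ≠ 0) (hz2ne : z2 ≠ 0) (hne : z1 ≠ z2) :
    barrlundCircle p z1 z2 < barrlundCircle p (1 / z1) (1 / z2) := by
  have hp0 : 0 < p := lt_of_lt_of_le one_pos hp
  set S : Set ℂ := {u : ℂ | ‖u‖ = 1} with hSdef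
  have hScompact : IsCompact S := by
    have : S = Metric.sphere (0:ℂ) 1 := by
      ext u; simp [hSdef, Complex.dist_eq]
    rw [this]; exact isCompact_sphere 0 1
  have hSne : S.Nonempty := ⟨1, by simp [hSdef]⟩
  set f : ℂ → ℝ := fun u => dist z1 z2 / (dist z1 u ^ p + dist u z2 ^ p) ^ (1 / p) with hfdef
  set g : ℂ → ℝ := fun u =>
    dist (1/z1) (1/z2) / (dist (1/z1) u ^ p + dist u (1/z2) ^ p) ^ (1 / p) with hgdef
  have hfc : ContinuousOn f S := contOn_aux p hp0 z1 z2 (ne_of_lt hz1)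
  have ha1 : 1 < ‖1/z1‖ := by
    rw [norm_div, norm_one]
    have ha : 0 < ‖z1‖ := by simpa using hz1ne
    exact (one_lt_div ha).2 hz1
  have hgc : ContinuousOn g S := contOn_aux p hp0 (1/z1) (1/z2) (ne_of_gt ha1)
  obtain ⟨v0, hv0S, hmax⟩ := hScompact.exists_isMaxOn hSne hfc
  have hfa : barrlundCircle p z1 z2 = f v0 := by
    apply IsGreatest.csSup_eq
    constructor
    · exact Set.mem_image_of_mem f hv0S
    · rintro x ⟨u, hu, rfl⟩
      exact hmax hu
  have hconjS : starRingEnd ℂ v0 ∈ S := by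
    simpa [hSdef] using hv0S
  have hgb : g (starRingEnd ℂ v0) ≤ barrlundCircle p (1/z1) (1/z2) := by
    apply le_csSup
    · exact (hScompact.image_of_continuousOn hgc).bddAbove
    · exact Set.mem_image_of_mem g hconjS
  calc barrlundCircle p z1 z2 = f v0 := hfa
    _ < g (starRingEnd ℂ v0) :=
        pointwise_key p hp z1 z2 v0 hz1 hz2 hz1ne hz2ne hne hv0S
    _ ≤ barrlundCircle p (1/z1) (1/z2) := hgb
end

section
/- Let z1, z2 ∈ H (upper half plane), p ≥ 1, and set α = Im(z1)/(Im(z1)+Im(z2)). Then b_{H,p}(z1,z2) ≥ |z1-z2| / ( |z1 - conj(z2)| · (α^p + (1-α)^p)^{1/p} ) ≥ |z1-z2| / |z1 - conj(z2)|. -/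
theorem stmt16 (z1 z2 : ℂ) (hz1 : 0 < z1.im) (hz2 : 0 < z2.im) (p : ℝ) (hp : 1 ≤ p) :
    ‖z1 - z2‖ /
        (‖z1 - (starRingEnd ℂ) z2‖ *
          ((z1.im / (z1.im + z2.im)) ^ p + (1 - z1.im / (z1.im + z2.im)) ^ p) ^ (1 / p)) ≤
      barrlundH p z1 z2 ∧
    ‖z1 - z2‖ / ‖z1 - (starRingEnd ℂ) z2‖ ≤
      ‖z1 - z2‖ /
        (‖z1 - (starRingEnd ℂ) z2‖ *
          ((z1.im / (z1.im + z2.im)) ^ p + (1 - z1.im / (z1.im + z2.im)) ^ p) ^ (1 / p)) := by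
  have hp0 : 0 < p := lt_of_lt_of_le one_pos hp
  set y1 := z1.im
  set y2 := z2.im
  have hsum : 0 < y1 + y2 := by positivity
  set α : ℝ := y1 / (y1 + y2) with hα
  have hα0 : 0 < α := by positivity
  have hα1 : α < 1 := by
    rw [hα, div_lt_one hsum]; linarith
  have h1α : 0 < 1 - α := by linarith
  set D := ‖z1 - (starRingEnd ℂ) z2‖ with hD
  have hDim : (z1 - (starRingEnd ℂ) z2).im = y1 + y2 := by
    simp [Complex.sub_im, Complex.conj_im, y1, y2]
  have hD0 : 0 < D := by
    rw [hD]
    have : z1 - (starRingEnd ℂ) z2 ≠ 0 := by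
      intro h
      rw [h] at hDim
      simp at hDim
      linarith
    exact (norm_pos_iff.mpr this)
  set S : ℝ := α ^ p + (1 - α) ^ p with hS
  have hS0 : 0 < S := by
    have := Real.rpow_pos_of_pos hα0 p
    have := Real.rpow_pos_of_pos h1α p
    positivity
  have hS1 : S ≤ 1 := by
    have h1 : α ^ p ≤ α := by
      calc α ^ p ≤ α ^ (1:ℝ) :=
        Real.rpow_le_rpow_of_exponent_ge hα0 hα1.le hp
      _ = α := Real.rpow_one α
    have h2 : (1 - α) ^ p ≤ 1 - α := by
      calc (1 - α) ^ p ≤ (1 - α) ^ (1:ℝ) :=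
        Real.rpow_le_rpow_of_exponent_ge h1α (by linarith) hp
      _ = 1 - α := Real.rpow_one _
    rw [hS]; linarith
  set t0 : ℝ := (y2 * z1.re + y1 * z2.re) / (y1 + y2) with ht0
  have key1 : z1 - (t0 : ℂ) = (α : ℂ) * (z1 - (starRingEnd ℂ) z2) := by
    apply Complex.ext
    · simp only [Complex.sub_re, Complex.ofReal_re, Complex.mul_re, Complex.ofReal_im,
        Complex.conj_re, Complex.conj_im]
      simp only [ht0, hα, y1, y2]
      have hne : z1.im + z2.im ≠ 0 := hsum.ne'
      field_simp
      ring
    · simp only [Complex.sub_im, Complex.ofReal_im, Complex.mul_im, Complex.ofReal_re,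
        Complex.conj_im, Complex.conj_re, Complex.sub_re]
      simp only [hα, y1, y2]
      have hne : z1.im + z2.im ≠ 0 := hsum.ne'
      field_simp
      ring
  have key2 : (t0 : ℂ) - z2 = ((1 - α : ℝ) : ℂ) * (starRingEnd ℂ) (z1 - (starRingEnd ℂ) z2) := by
    apply Complex.ext
    · simp only [Complex.sub_re, Complex.ofReal_re, Complex.mul_re, Complex.ofReal_im,
        Complex.conj_re, Complex.conj_im, Complex.sub_im]
      simp only [ht0, hα, y1, y2]
      have hne : z1.im + z2.im ≠ 0 := hsum.ne'
      field_simp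
      ring
    · simp only [Complex.sub_im, Complex.ofReal_im, Complex.mul_im, Complex.ofReal_re,
        Complex.conj_im, Complex.conj_re, Complex.sub_re]
      simp only [hα, y1, y2]
      have hne : z1.im + z2.im ≠ 0 := hsum.ne'
      field_simp
      ring
  have hd1 : dist z1 (t0 : ℂ) = α * D := by
    rw [Complex.dist_eq, key1, norm_mul, Complex.norm_real, Real.norm_eq_abs, abs_of_pos hα0]
  have hd2 : dist (t0 : ℂ) z2 = (1 - α) * D := by
    rw [Complex.dist_eq, key2, norm_mul, Complex.norm_real, Real.norm_eq_abs, abs_of_pos h1α,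
      Complex.norm_conj]
  -- value at t0
  have hval : dist z1 z2 / (dist z1 (t0 : ℂ) ^ p + dist (t0 : ℂ) z2 ^ p) ^ (1 / p)
      = ‖z1 - z2‖ / (D * S ^ (1 / p)) := by
    rw [hd1, hd2, Real.mul_rpow hα0.le hD0.le, Real.mul_rpow h1α.le hD0.le, Complex.dist_eq]
    congr 1
    rw [show α ^ p * D ^ p + (1 - α) ^ p * D ^ p = S * D ^ p by rw [hS]; ring,
      Real.mul_rpow hS0.le (Real.rpow_nonneg hD0.le p)]
    rw [← Real.rpow_mul hD0.le, mul_one_div, div_self hp0.ne', Real.rpow_one]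
    ring
  have hbdd : BddAbove (Set.range fun t : ℝ =>
      dist z1 z2 / (dist z1 (t : ℂ) ^ p + dist (t : ℂ) z2 ^ p) ^ (1 / p)) := by
    refine ⟨dist z1 z2 / y1, ?_⟩
    rintro x ⟨t, rfl⟩
    have him : y1 ≤ dist z1 (t : ℂ) := by
      rw [Complex.dist_eq]
      calc y1 = |(z1 - (t:ℂ)).im| := by
            simp [Complex.sub_im, abs_of_pos hz1]
            exact (abs_of_pos hz1).symm
        _ ≤ ‖z1 - (t:ℂ)‖ := Complex.abs_im_le_norm _
    have hle : y1 ≤ (dist z1 (t : ℂ) ^ p + dist (t : ℂ) z2 ^ p) ^ (1 / p) := by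
      have h1 : y1 ^ p ≤ dist z1 (t : ℂ) ^ p + dist (t : ℂ) z2 ^ p := by
        have := Real.rpow_le_rpow hz1.le him hp0.le
        have h2 : 0 ≤ dist (t : ℂ) z2 ^ p := Real.rpow_nonneg dist_nonneg p
        linarith
      calc y1 = (y1 ^ p) ^ (1/p) := by
            rw [← Real.rpow_mul hz1.le, mul_one_div, div_self hp0.ne', Real.rpow_one]
        _ ≤ _ := Real.rpow_le_rpow (Real.rpow_nonneg hz1.le p) h1 (by positivity)
    exact div_le_div_of_nonneg_left dist_nonneg hz1 hle
  constructor
  · have := le_csSup hbdd (Set.mem_range_self t0)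
    rw [hval] at this
    exact this
  · apply div_le_div_of_nonneg_left (by positivity) (by positivity)
    calc D * S ^ (1 / p) ≤ D * 1 := by
          gcongr
          exact Real.rpow_le_one hS0.le hS1 (by positivity)
      _ = D := mul_one D
end

section
/- Let 1 ≤ p ≤ ∞ and a ∈ D (the open unit disk in ℂ). The Möbius transformation T_a(z) = (z - a)/(1 - conj(a)·z) is an L-bilipschitz self-map of (D, b_{D,p}) with constant L = (1+|a|)/(1-|a|), i.e. b_{D,p}(z1,z2)/L ≤ b_{D,p}(T_a(z1), T_a(z2)) ≤ L·b_{D,p}(z1,z2) for all z1, z2 ∈ D. -/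
/-- Barrlund distance with parameter `p` in the unit disk. -/
noncomputable def barrlundD (p : ℝ) (z1 z2 : ℂ) : ℝ :=
  sSup ((fun w => dist z1 z2 / (dist z1 w ^ p + dist w z2 ^ p) ^ (1 / p)) ''
    {w : ℂ | ‖w‖ = 1})

/-- Barrlund distance with parameter `∞` in the unit disk. -/
noncomputable def barrlundDInf (z1 z2 : ℂ) : ℝ :=
  sSup ((fun w => dist z1 z2 / max (dist z1 w) (dist z2 w)) ''
    {w : ℂ | ‖w‖ = 1})

/-- The Möbius transformation `T_a`. -/
noncomputable def Tmob (a z : ℂ) : ℂ := (z - a) / (1 - (starRingEnd ℂ) a * z)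

namespace Stmt19Aux
open Complex Set




lemma denom_ne {a u : ℂ} (h : ‖a‖ * ‖u‖ < 1) :
    1 - (starRingEnd ℂ) a * u ≠ 0 := by
  intro hcon
  have h1 : (1 : ℂ) = (starRingEnd ℂ) a * u := by linear_combination hcon
  have h2 := congrArg (‖·‖) h1
  simp only [norm_one, norm_mul, Complex.norm_conj] at h2
  rw [← h2] at h
  exact lt_irrefl _ h

lemma m_le {a u : ℂ} (hu : ‖u‖ ≤ 1) :
    ‖1 - (starRingEnd ℂ) a * u‖ ≤ 1 + ‖a‖ := by
  have h1 : ‖1 - (starRingEnd ℂ) a * u‖ ≤ ‖(1 : ℂ)‖ + ‖(starRingEnd ℂ) a * u‖ :=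
    norm_sub_le _ _
  have h2 : ‖(starRingEnd ℂ) a * u‖ ≤ ‖a‖ := by
    rw [norm_mul, Complex.norm_conj]
    nlinarith [norm_nonneg a, norm_nonneg u]
  simp only [norm_one] at h1
  linarith

lemma m_ge {a u : ℂ} (hu : ‖u‖ ≤ 1) :
    1 - ‖a‖ ≤ ‖1 - (starRingEnd ℂ) a * u‖ := by
  have h1 : ‖(1 : ℂ)‖ - ‖(starRingEnd ℂ) a * u‖ ≤
      ‖1 - (starRingEnd ℂ) a * u‖ := by
    simpa using norm_sub_norm_le (1 : ℂ) ((starRingEnd ℂ) a * u)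
  have h2 : ‖(starRingEnd ℂ) a * u‖ ≤ ‖a‖ := by
    rw [norm_mul, Complex.norm_conj]
    nlinarith [norm_nonneg a, norm_nonneg u]
  simp only [norm_one] at h1
  linarith

lemma Tmob_sub (a u v : ℂ) (hu : 1 - (starRingEnd ℂ) a * u ≠ 0)
    (hv : 1 - (starRingEnd ℂ) a * v ≠ 0) :
    Tmob a u - Tmob a v =
      (1 - (starRingEnd ℂ) a * a) * (u - v) /
        ((1 - (starRingEnd ℂ) a * u) * (1 - (starRingEnd ℂ) a * v)) := by
  unfold Tmob
  rw [div_sub_div _ _ hu hv]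
  congr 1
  ring

lemma Tdist (a u v : ℂ) (ha : ‖a‖ < 1) (hu : 1 - (starRingEnd ℂ) a * u ≠ 0)
    (hv : 1 - (starRingEnd ℂ) a * v ≠ 0) :
    dist (Tmob a u) (Tmob a v) =
      (1 - ‖a‖ ^ 2) * dist u v /
        (‖1 - (starRingEnd ℂ) a * u‖ * ‖1 - (starRingEnd ℂ) a * v‖) := by
  rw [Complex.dist_eq, Complex.dist_eq, Tmob_sub a u v hu hv, norm_div, norm_mul, norm_mul]
  congr 2
  have h1 : (1 : ℂ) - (starRingEnd ℂ) a * a = ((1 - ‖a‖ ^ 2 : ℝ) : ℂ) := by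
    have := Complex.mul_conj a
    push_cast
    rw [show ((starRingEnd ℂ) a) * a = a * (starRingEnd ℂ) a from mul_comm _ _, this,
      Complex.normSq_eq_norm_sq]
    push_cast
    ring
  rw [h1, Complex.norm_real, Real.norm_eq_abs]
  exact abs_of_nonneg (by nlinarith [norm_nonneg a])

lemma abs_one_sub_conj {a w : ℂ} (hw : ‖w‖ = 1) :
    ‖1 - (starRingEnd ℂ) a * w‖ = ‖w - a‖ := by
  have hww : (starRingEnd ℂ) w * w = 1 := by
    rw [mul_comm, Complex.mul_conj, Complex.normSq_eq_norm_sq, hw]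
    norm_num
  calc ‖1 - (starRingEnd ℂ) a * w‖
      = ‖(starRingEnd ℂ) (1 - (starRingEnd ℂ) a * w)‖ := (Complex.norm_conj _).symm
    _ = ‖(starRingEnd ℂ) w * (w - a)‖ := by
        congr 1
        simp only [map_sub, map_one, map_mul, Complex.conj_conj]
        rw [mul_sub, hww]
        ring
    _ = ‖w - a‖ := by rw [norm_mul, Complex.norm_conj, hw, one_mul]

lemma Tcircle {a w : ℂ} (ha : ‖a‖ < 1) (hw : ‖w‖ = 1) :
    ‖Tmob a w‖ = 1 := by
  have hne : 1 - (starRingEnd ℂ) a * w ≠ 0 := denom_ne (by rw [hw]; simpa using ha)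
  have habs : ‖1 - (starRingEnd ℂ) a * w‖ ≠ 0 :=
    norm_ne_zero_iff.mpr hne
  unfold Tmob
  rw [norm_div, abs_one_sub_conj hw, div_self]
  rwa [← abs_one_sub_conj hw]

lemma T_comp (a z : ℂ) (ha : ‖a‖ < 1) (hz : ‖z‖ ≤ 1) :
    Tmob a (Tmob (-a) z) = z := by
  have hd : (1 : ℂ) + (starRingEnd ℂ) a * z ≠ 0 := by
    have := denom_ne (a := -a) (u := z)
      (by simpa using (mul_le_of_le_one_right (norm_nonneg a) hz).trans_lt ha)
    simpa [map_neg] using this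
  have hna : (1 : ℂ) - (starRingEnd ℂ) a * a ≠ 0 :=
    denom_ne (by nlinarith [norm_nonneg a])
  have h1 : Tmob (-a) z = (z + a) / (1 + (starRingEnd ℂ) a * z) := by
    unfold Tmob; rw [map_neg]; ring_nf
  have h2 : 1 - (starRingEnd ℂ) a * ((z + a) / (1 + (starRingEnd ℂ) a * z)) =
      (1 - (starRingEnd ℂ) a * a) / (1 + (starRingEnd ℂ) a * z) := by
    field_simp
    ring
  rw [h1]
  unfold Tmob
  rw [h2, div_eq_iff (div_ne_zero hna hd)]
  rw [mul_div_assoc', eq_div_iff hd, sub_mul, div_mul_cancel₀ _ hd]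
  ring
lemma Timage {a : ℂ} (ha : ‖a‖ < 1) :
    (Tmob a) '' {w : ℂ | ‖w‖ = 1} = {w : ℂ | ‖w‖ = 1} := by
  ext w'
  constructor
  · rintro ⟨w, hw, rfl⟩
    exact Tcircle ha hw
  · intro hw'
    refine ⟨Tmob (-a) w', Tcircle (by simpa using ha) hw', ?_⟩
    exact T_comp a w' ha (le_of_eq hw')

lemma csSup_le_mul {S : Set ℂ} (hS : S.Nonempty) (f g : ℂ → ℝ) (c M : ℝ) (hc : 0 ≤ c)
    (hg0 : ∀ w ∈ S, 0 ≤ g w) (hgM : ∀ w ∈ S, g w ≤ M)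
    (h : ∀ w ∈ S, f w ≤ c * g w) :
    sSup (f '' S) ≤ c * sSup (g '' S) := by
  have hbdd : BddAbove (g '' S) := ⟨M, by rintro x ⟨w, hw, rfl⟩; exact hgM w hw⟩
  obtain ⟨w0, hw0⟩ := hS
  have hgs : 0 ≤ sSup (g '' S) :=
    le_trans (hg0 w0 hw0) (le_csSup hbdd ⟨w0, hw0, rfl⟩)
  refine Real.sSup_le ?_ (mul_nonneg hc hgs)
  rintro x ⟨w, hw, rfl⟩
  exact (h w hw).trans (mul_le_mul_of_nonneg_left (le_csSup hbdd ⟨w, hw, rfl⟩) hc)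
lemma ratio_core (Φ : ℝ → ℝ → ℝ)
    (hhom : ∀ c x y : ℝ, 0 ≤ c → 0 ≤ x → 0 ≤ y → Φ (c * x) (c * y) = c * Φ x y)
    (hmono : ∀ x x' y y' : ℝ, 0 ≤ x → 0 ≤ y → x ≤ x' → y ≤ y' → Φ x y ≤ Φ x' y')
    (hpos : ∀ x y : ℝ, 0 < x → 0 ≤ y → 0 < Φ x y)
    (α m1 m2 mw d12 d1w dw2 : ℝ) (hα0 : 0 ≤ α) (hα1 : α < 1)
    (hm1l : 1 - α ≤ m1) (hm2l : 1 - α ≤ m2) (hmwl : 1 - α ≤ mw)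
    (hm1u : m1 ≤ 1 + α) (hm2u : m2 ≤ 1 + α) (hmwu : mw ≤ 1 + α)
    (hd12n : 0 ≤ d12) (hd1wp : 0 < d1w) (hdw2p : 0 < dw2) :
    ((1 - α ^ 2) * d12 / (m1 * m2)) /
        Φ ((1 - α ^ 2) * d1w / (m1 * mw)) ((1 - α ^ 2) * dw2 / (mw * m2)) ≤
      (1 + α) / (1 - α) * (d12 / Φ d1w dw2) ∧
    d12 / Φ d1w dw2 ≤
      (1 + α) / (1 - α) * (((1 - α ^ 2) * d12 / (m1 * m2)) /
        Φ ((1 - α ^ 2) * d1w / (m1 * mw)) ((1 - α ^ 2) * dw2 / (mw * m2))) := by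
  have hm1 : 0 < m1 := by linarith
  have hm2 : 0 < m2 := by linarith
  have hmw : 0 < mw := by linarith
  have hc : 0 < (1 - α ^ 2) / (m1 * m2 * mw) :=
    div_pos (by nlinarith) (by positivity)
  have e0 : (1 - α ^ 2) * d12 / (m1 * m2) =
      (1 - α ^ 2) / (m1 * m2 * mw) * (mw * d12) := by field_simp
  have e1 : (1 - α ^ 2) * d1w / (m1 * mw) =
      (1 - α ^ 2) / (m1 * m2 * mw) * (d1w * m2) := by field_simp
  have e2 : (1 - α ^ 2) * dw2 / (mw * m2) =
      (1 - α ^ 2) / (m1 * m2 * mw) * (dw2 * m1) := by field_simp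
  rw [e0, e1, e2, hhom _ _ _ hc.le (mul_nonneg hd1wp.le hm2.le)
    (mul_nonneg hdw2p.le hm1.le), mul_div_mul_left _ _ hc.ne']
  have hΦo : 0 < Φ d1w dw2 := hpos _ _ hd1wp hdw2p.le
  have hΦt : 0 < Φ (d1w * m2) (dw2 * m1) :=
    hpos _ _ (mul_pos hd1wp hm2) (mul_nonneg hdw2p.le hm1.le)
  have hub : Φ (d1w * m2) (dw2 * m1) ≤ (1 + α) * Φ d1w dw2 := by
    rw [← hhom _ _ _ (by linarith) hd1wp.le hdw2p.le]
    exact hmono _ _ _ _ (mul_nonneg hd1wp.le hm2.le) (mul_nonneg hdw2p.le hm1.le)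
      (by nlinarith) (by nlinarith)
  have hlb : (1 - α) * Φ d1w dw2 ≤ Φ (d1w * m2) (dw2 * m1) := by
    rw [← hhom _ _ _ (by linarith) hd1wp.le hdw2p.le]
    exact hmono _ _ _ _ (mul_nonneg (by linarith) hd1wp.le)
      (mul_nonneg (by linarith) hdw2p.le) (by nlinarith) (by nlinarith)
  have hmw0 : 0 ≤ mw * d12 := mul_nonneg hmw.le hd12n
  constructor
  · calc mw * d12 / Φ (d1w * m2) (dw2 * m1) ≤
        ((1 + α) * d12) / ((1 - α) * Φ d1w dw2) :=
          div_le_div₀ (mul_nonneg (by linarith) hd12n) (by nlinarith)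
            (mul_pos (by linarith) hΦo) hlb
      _ = (1 + α) / (1 - α) * (d12 / Φ d1w dw2) := by rw [div_mul_div_comm]
  · have h2 : ((1 - α) * d12) / ((1 + α) * Φ d1w dw2) ≤
        mw * d12 / Φ (d1w * m2) (dw2 * m1) :=
      div_le_div₀ hmw0 (by nlinarith) hΦt hub
    have heq : (1 + α) / (1 - α) * (((1 - α) * d12) / ((1 + α) * Φ d1w dw2)) =
        d12 / Φ d1w dw2 := by
      rw [div_mul_div_comm, div_eq_div_iff
        (mul_ne_zero (by linarith) (mul_ne_zero (by linarith) hΦo.ne')) hΦo.ne']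
      ring
    calc d12 / Φ d1w dw2 =
        (1 + α) / (1 - α) * (((1 - α) * d12) / ((1 + α) * Φ d1w dw2)) := heq.symm
      _ ≤ (1 + α) / (1 - α) * (mw * d12 / Φ (d1w * m2) (dw2 * m1)) :=
          mul_le_mul_of_nonneg_left h2 (div_nonneg (by linarith) (by linarith))

lemma dist_ge_one {z w : ℂ} (hz : ‖z‖ < 1) (hw : ‖w‖ = 1) :
    1 - ‖z‖ ≤ dist z w := by
  have h := norm_sub_norm_le w z
  rw [hw] at h
  have : dist z w = ‖w - z‖ := by rw [dist_comm, Complex.dist_eq]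
  rw [this]
  exact h

lemma pointwise (Φ : ℝ → ℝ → ℝ)
    (hhom : ∀ c x y : ℝ, 0 ≤ c → 0 ≤ x → 0 ≤ y → Φ (c * x) (c * y) = c * Φ x y)
    (hmono : ∀ x x' y y' : ℝ, 0 ≤ x → 0 ≤ y → x ≤ x' → y ≤ y' → Φ x y ≤ Φ x' y')
    (hpos : ∀ x y : ℝ, 0 < x → 0 ≤ y → 0 < Φ x y)
    (a z1 z2 w : ℂ) (ha : ‖a‖ < 1) (hz1 : ‖z1‖ < 1)
    (hz2 : ‖z2‖ < 1) (hw : ‖w‖ = 1) :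
    dist (Tmob a z1) (Tmob a z2) /
        Φ (dist (Tmob a z1) (Tmob a w)) (dist (Tmob a w) (Tmob a z2)) ≤
      (1 + ‖a‖) / (1 - ‖a‖) *
        (dist z1 z2 / Φ (dist z1 w) (dist w z2)) ∧
    dist z1 z2 / Φ (dist z1 w) (dist w z2) ≤
      (1 + ‖a‖) / (1 - ‖a‖) *
        (dist (Tmob a z1) (Tmob a z2) /
          Φ (dist (Tmob a z1) (Tmob a w)) (dist (Tmob a w) (Tmob a z2))) := by
  have ha0 := norm_nonneg a
  have hd1 : 1 - (starRingEnd ℂ) a * z1 ≠ 0 :=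
    denom_ne (by nlinarith [norm_nonneg z1])
  have hd2 : 1 - (starRingEnd ℂ) a * z2 ≠ 0 :=
    denom_ne (by nlinarith [norm_nonneg z2])
  have hdw : 1 - (starRingEnd ℂ) a * w ≠ 0 := denom_ne (by rw [hw]; simpa using ha)
  have hd1wp : 0 < dist z1 w := lt_of_lt_of_le (by linarith) (dist_ge_one hz1 hw)
  have hdw2p : 0 < dist w z2 := by
    rw [dist_comm]
    exact lt_of_lt_of_le (by linarith) (dist_ge_one hz2 hw)
  rw [Tdist a z1 z2 ha hd1 hd2, Tdist a z1 w ha hd1 hdw, Tdist a w z2 ha hdw hd2]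
  exact ratio_core Φ hhom hmono hpos (‖a‖) _ _ _ _ _ _ ha0 ha
    (m_ge hz1.le) (m_ge hz2.le) (m_ge hw.le) (m_le hz1.le) (m_le hz2.le) (m_le hw.le)
    dist_nonneg hd1wp hdw2p
lemma main (Φ : ℝ → ℝ → ℝ)
    (hhom : ∀ c x y : ℝ, 0 ≤ c → 0 ≤ x → 0 ≤ y → Φ (c * x) (c * y) = c * Φ x y)
    (hmono : ∀ x x' y y' : ℝ, 0 ≤ x → 0 ≤ y → x ≤ x' → y ≤ y' → Φ x y ≤ Φ x' y')
    (hpos : ∀ x y : ℝ, 0 < x → 0 ≤ y → 0 < Φ x y)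
    (hge : ∀ x y : ℝ, 0 ≤ x → 0 ≤ y → x ≤ Φ x y)
    (a z1 z2 : ℂ) (ha : ‖a‖ < 1) (hz1 : ‖z1‖ < 1)
    (hz2 : ‖z2‖ < 1) :
    sSup ((fun w => dist (Tmob a z1) (Tmob a z2) /
        Φ (dist (Tmob a z1) w) (dist w (Tmob a z2))) '' {w : ℂ | ‖w‖ = 1}) ≤
      (1 + ‖a‖) / (1 - ‖a‖) *
        sSup ((fun w => dist z1 z2 / Φ (dist z1 w) (dist w z2)) ''
          {w : ℂ | ‖w‖ = 1}) ∧
    sSup ((fun w => dist z1 z2 / Φ (dist z1 w) (dist w z2)) ''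
        {w : ℂ | ‖w‖ = 1}) ≤
      (1 + ‖a‖) / (1 - ‖a‖) *
        sSup ((fun w => dist (Tmob a z1) (Tmob a z2) /
          Φ (dist (Tmob a z1) w) (dist w (Tmob a z2))) '' {w : ℂ | ‖w‖ = 1}) := by
  have ha0 := norm_nonneg a
  have hL : (0:ℝ) ≤ (1 + ‖a‖) / (1 - ‖a‖) :=
    div_nonneg (by linarith) (by linarith)
  have hSne : ({w : ℂ | ‖w‖ = 1} : Set ℂ).Nonempty := ⟨1, by simp⟩
  have himg : ((fun w => dist (Tmob a z1) (Tmob a z2) /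
      Φ (dist (Tmob a z1) w) (dist w (Tmob a z2))) '' {w : ℂ | ‖w‖ = 1}) =
      ((fun w => dist (Tmob a z1) (Tmob a z2) /
        Φ (dist (Tmob a z1) (Tmob a w)) (dist (Tmob a w) (Tmob a z2))) ''
          {w : ℂ | ‖w‖ = 1}) := by
    conv_lhs => rw [← Timage ha]
    rw [Set.image_image]
  have hGpos : ∀ w ∈ {w : ℂ | ‖w‖ = 1},
      0 ≤ dist z1 z2 / Φ (dist z1 w) (dist w z2) := by
    intro w hw
    exact div_nonneg dist_nonneg (dist_nonneg.trans (hge _ _ dist_nonneg dist_nonneg))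
  have hGM : ∀ w ∈ {w : ℂ | ‖w‖ = 1},
      dist z1 z2 / Φ (dist z1 w) (dist w z2) ≤ dist z1 z2 / (1 - ‖z1‖) := by
    intro w hw
    have hΦ : 1 - ‖z1‖ ≤ Φ (dist z1 w) (dist w z2) :=
      le_trans (dist_ge_one hz1 hw) (hge _ _ dist_nonneg dist_nonneg)
    exact div_le_div_of_nonneg_left dist_nonneg (by linarith) hΦ
  have hFpos : ∀ w ∈ {w : ℂ | ‖w‖ = 1},
      0 ≤ dist (Tmob a z1) (Tmob a z2) /
        Φ (dist (Tmob a z1) (Tmob a w)) (dist (Tmob a w) (Tmob a z2)) := by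
    intro w hw
    exact div_nonneg dist_nonneg (dist_nonneg.trans (hge _ _ dist_nonneg dist_nonneg))
  have hFM : ∀ w ∈ {w : ℂ | ‖w‖ = 1},
      dist (Tmob a z1) (Tmob a z2) /
        Φ (dist (Tmob a z1) (Tmob a w)) (dist (Tmob a w) (Tmob a z2)) ≤
      (1 + ‖a‖) / (1 - ‖a‖) *
        (dist z1 z2 / (1 - ‖z1‖)) := by
    intro w hw
    exact le_trans (pointwise Φ hhom hmono hpos a z1 z2 w ha hz1 hz2 hw).1
      (mul_le_mul_of_nonneg_left (hGM w hw) hL)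
  constructor
  · rw [himg]
    exact csSup_le_mul hSne _ _ _ (dist z1 z2 / (1 - ‖z1‖)) hL hGpos hGM
      (fun w hw => (pointwise Φ hhom hmono hpos a z1 z2 w ha hz1 hz2 hw).1)
  · rw [himg]
    exact csSup_le_mul hSne _ _ _
      ((1 + ‖a‖) / (1 - ‖a‖) * (dist z1 z2 / (1 - ‖z1‖)))
      hL hFpos hFM
      (fun w hw => (pointwise Φ hhom hmono hpos a z1 z2 w ha hz1 hz2 hw).2)
lemma phiP_hom (p : ℝ) (hp : 1 ≤ p) : ∀ c x y : ℝ, 0 ≤ c → 0 ≤ x → 0 ≤ y →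
    ((c * x) ^ p + (c * y) ^ p) ^ (1 / p) = c * (x ^ p + y ^ p) ^ (1 / p) := by
  intro c x y hc hx hy
  have hp0 : p ≠ 0 := by linarith
  rw [Real.mul_rpow hc hx, Real.mul_rpow hc hy, ← mul_add,
    Real.mul_rpow (Real.rpow_nonneg hc p)
      (add_nonneg (Real.rpow_nonneg hx p) (Real.rpow_nonneg hy p)),
    ← Real.rpow_mul hc, mul_one_div_cancel hp0, Real.rpow_one]

lemma phiP_mono (p : ℝ) (hp : 1 ≤ p) : ∀ x x' y y' : ℝ, 0 ≤ x → 0 ≤ y → x ≤ x' → y ≤ y' →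
    (x ^ p + y ^ p) ^ (1 / p) ≤ (x' ^ p + y' ^ p) ^ (1 / p) := by
  intro x x' y y' hx hy hxx hyy
  exact Real.rpow_le_rpow
    (add_nonneg (Real.rpow_nonneg hx p) (Real.rpow_nonneg hy p))
    (add_le_add (Real.rpow_le_rpow hx hxx (by linarith))
      (Real.rpow_le_rpow hy hyy (by linarith)))
    (by positivity)

lemma phiP_pos (p : ℝ) (hp : 1 ≤ p) : ∀ x y : ℝ, 0 < x → 0 ≤ y →
    0 < (x ^ p + y ^ p) ^ (1 / p) :=
  fun x y hx hy => Real.rpow_pos_of_pos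
    (add_pos_of_pos_of_nonneg (Real.rpow_pos_of_pos hx p) (Real.rpow_nonneg hy p)) _

lemma phiP_ge (p : ℝ) (hp : 1 ≤ p) : ∀ x y : ℝ, 0 ≤ x → 0 ≤ y →
    x ≤ (x ^ p + y ^ p) ^ (1 / p) := by
  intro x y hx hy
  have hp0 : p ≠ 0 := by linarith
  calc x = (x ^ p) ^ (1 / p) := by
        rw [← Real.rpow_mul hx, mul_one_div_cancel hp0, Real.rpow_one]
    _ ≤ (x ^ p + y ^ p) ^ (1 / p) :=
        Real.rpow_le_rpow (Real.rpow_nonneg hx p)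
          (le_add_of_nonneg_right (Real.rpow_nonneg hy p)) (by positivity)

lemma phiM_hom : ∀ c x y : ℝ, 0 ≤ c → 0 ≤ x → 0 ≤ y →
    max (c * x) (c * y) = c * max x y := by
  intro c x y hc hx hy
  rcases le_total x y with h | h
  · rw [max_eq_right h, max_eq_right (mul_le_mul_of_nonneg_left h hc)]
  · rw [max_eq_left h, max_eq_left (mul_le_mul_of_nonneg_left h hc)]

lemma phiM_mono : ∀ x x' y y' : ℝ, 0 ≤ x → 0 ≤ y → x ≤ x' → y ≤ y' →
    max x y ≤ max x' y' := fun _ _ _ _ _ _ h1 h2 => max_le_max h1 h2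

lemma phiM_pos : ∀ x y : ℝ, 0 < x → 0 ≤ y → 0 < max x y :=
  fun x y hx _ => lt_of_lt_of_le hx (le_max_left _ _)

lemma phiM_ge : ∀ x y : ℝ, 0 ≤ x → 0 ≤ y → x ≤ max x y :=
  fun x y _ _ => le_max_left _ _

end Stmt19Aux

theorem stmt19 (a : ℂ) (ha : ‖a‖ < 1) (z1 z2 : ℂ)
    (hz1 : ‖z1‖ < 1) (hz2 : ‖z2‖ < 1) :
    (∀ p : ℝ, 1 ≤ p →
      barrlundD p z1 z2 / ((1 + ‖a‖) / (1 - ‖a‖)) ≤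
          barrlundD p (Tmob a z1) (Tmob a z2) ∧
        barrlundD p (Tmob a z1) (Tmob a z2) ≤
          (1 + ‖a‖) / (1 - ‖a‖) * barrlundD p z1 z2) ∧
    (barrlundDInf z1 z2 / ((1 + ‖a‖) / (1 - ‖a‖)) ≤
        barrlundDInf (Tmob a z1) (Tmob a z2) ∧
      barrlundDInf (Tmob a z1) (Tmob a z2) ≤
        (1 + ‖a‖) / (1 - ‖a‖) * barrlundDInf z1 z2) := by
  have ha0 := norm_nonneg a
  have hLpos : (0:ℝ) < (1 + ‖a‖) / (1 - ‖a‖) :=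
    div_pos (by linarith) (by linarith)
  constructor
  · intro p hp
    have h := Stmt19Aux.main (fun x y : ℝ => (x ^ p + y ^ p) ^ (1 / p))
      (Stmt19Aux.phiP_hom p hp) (Stmt19Aux.phiP_mono p hp) (Stmt19Aux.phiP_pos p hp)
      (Stmt19Aux.phiP_ge p hp) a z1 z2 ha hz1 hz2
    unfold barrlundD
    constructor
    · rw [div_le_iff₀ hLpos, mul_comm]
      exact h.2
    · exact h.1
  · have h := Stmt19Aux.main (fun x y : ℝ => max x y)
      Stmt19Aux.phiM_hom Stmt19Aux.phiM_mono Stmt19Aux.phiM_pos Stmt19Aux.phiM_ge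
      a z1 z2 ha hz1 hz2
    have e1 : (fun w => dist z1 z2 / max (dist z1 w) (dist z2 w)) =
        (fun w => dist z1 z2 / max (dist z1 w) (dist w z2)) := by
      funext w
      rw [dist_comm z2 w]
    have e2 : (fun w => dist (Tmob a z1) (Tmob a z2) /
        max (dist (Tmob a z1) w) (dist (Tmob a z2) w)) =
        (fun w => dist (Tmob a z1) (Tmob a z2) /
          max (dist (Tmob a z1) w) (dist w (Tmob a z2))) := by
      funext w
      rw [dist_comm (Tmob a z2) w]
    unfold barrlundDInf
    rw [e1, e2]
    constructor
    · rw [div_le_iff₀ hLpos, mul_comm]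
      exact h.2
    · exact h.1
end
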